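/- arXiv:2602.09054 — 5 statements merged into one kernel-verified Lean document; each statement's English description precedes it below -/
import Mathlib

section
/- Let n ≥ 1 and let W : ℝ → Matrix (Fin n) (Fin n) ℝ be continuous with W(t)_{ij} ≥ 0 for all i ≠ j and ∑_i W(t)_{ij} = 0 for all j and all t ≥ 0. Let p : ℝ → (Fin n → ℝ) be differentiable and solve p'(t) = W(t) · p(t) (matrix–vector product) for t ≥ 0, with p(0) a probability vector (all entries nonnegative, entries summing to 1). Then p(t) is a probability vector for every t ≥ 0. -/
/-!
Mass is conserved because the column sums of `W` vanish, so `∑ i, p i` has zero derivative.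
For positivity, let `C` bound the row sums of `W` on `[0, t]`. The perturbation
`q = p + ε e^{C (s - t)} 𝟙` satisfies `q i' > 0` whenever `q ≥ 0` and `q i = 0`, because the
off-diagonal entries of `W` are nonnegative; hence `q` cannot leave the nonnegative orthant, and
`ε → 0` gives `p t ≥ 0`.
-/

open Matrix Set Filter Topology

theorem Matrix.sum_mulVec_eq_zero {m n R : Type*} [Fintype m] [Fintype n]
    [NonUnitalNonAssocSemiring R] {A : Matrix m n R} (hA : ∀ j, ∑ i, A i j = 0) (v : n → R) :
    ∑ i, (A *ᵥ v) i = 0 := by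
  simp only [mulVec, dotProduct]
  rw [Finset.sum_comm]
  simp [← Finset.sum_mul, hA]

theorem Matrix.mulVec_apply_nonneg_of_apply_eq_zero {n R : Type*} [Fintype n] [Semiring R]
    [PartialOrder R] [IsOrderedRing R] {A : Matrix n n R} (hA : ∀ i j, i ≠ j → 0 ≤ A i j)
    {v : n → R} (hv : 0 ≤ v) {i : n} (hvi : v i = 0) : 0 ≤ (A *ᵥ v) i := by
  refine Finset.sum_nonneg fun j _ => ?_
  rcases eq_or_ne i j with rfl | hij
  · simp [hvi]
  · exact mul_nonneg (hA i j hij) (hv j)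

theorem IsCompact.exists_forall_sum_row_lt {ι : Type*} [Fintype ι] {K : Set ℝ} (hK : IsCompact K)
    {W : ℝ → Matrix ι ι ℝ} (hW : ContinuousOn W K) : ∃ C, ∀ s ∈ K, ∀ i, ∑ j, W s i j < C := by
  obtain ⟨C, hC⟩ := hK.exists_bound_of_continuousOn
    ((continuous_id.matrix_mulVec continuous_const).comp_continuousOn hW (g := (· *ᵥ 1)))
  refine ⟨C + 1, fun s hs i => ?_⟩
  calc ∑ j, W s i j = (W s *ᵥ 1) i := by simp [mulVec, dotProduct]
    _ ≤ ‖W s *ᵥ 1‖ := (Real.le_norm_self _).trans (norm_le_pi_norm _ i)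
    _ < C + 1 := (hC s hs).trans_lt (lt_add_one C)

theorem nonneg_of_deriv_right_pos_boundary {ι : Type*} [Finite ι]
    {q q' : ℝ → ι → ℝ} {a b : ℝ} (hq : ContinuousOn q (Icc a b)) (ha : 0 ≤ q a)
    (hq' : ∀ x ∈ Ico a b, HasDerivWithinAt q (q' x) (Ioi x) x)
    (hzero : ∀ x ∈ Ico a b, 0 ≤ q x → ∀ i, q x i = 0 → 0 < q' x i) :
    ∀ x ∈ Icc a b, 0 ≤ q x := by
  have hclosed : IsClosed ({x | 0 ≤ q x} ∩ Icc a b) := by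
    rw [inter_comm]
    exact hq.preimage_isClosed_of_isClosed isClosed_Icc isClosed_Ici
  refine fun x hx => hclosed.Icc_subset_of_forall_mem_nhdsWithin ha ?_ hx
  rintro x ⟨hx, hxab⟩
  have hcomp : ∀ i, ∀ᶠ z in 𝓝[>] x, 0 ≤ q z i := by
    intro i
    have hqi := hasDerivWithinAt_pi.1 (hq' x hxab) i
    rcases (hx i).eq_or_lt with h0 | hpos
    · have hslope := (hasDerivWithinAt_iff_tendsto_slope' (lt_irrefl x)).1 hqi
      filter_upwards [hslope.eventually (eventually_gt_nhds (hzero x hxab hx i h0.symm)),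
        self_mem_nhdsWithin] with z hz hxz
      exact (pos_of_slope_pos hxz hz h0.symm).le
    · filter_upwards [hqi.continuousWithinAt.eventually (eventually_gt_nhds hpos)] with z hz
      exact hz.le
  filter_upwards [eventually_all.2 hcomp] with z hz using hz

section RateEquation

variable {ι : Type*} [Fintype ι] {W : ℝ → Matrix ι ι ℝ} {p : ℝ → ι → ℝ} {a b : ℝ}

theorem sum_apply_eq_of_hasDerivAt_mulVec (hab : a ≤ b)
    (hcol : ∀ s ∈ Icc a b, ∀ j, ∑ i, W s i j = 0)
    (hp : ∀ s ∈ Icc a b, HasDerivAt p (W s *ᵥ p s) s) : ∑ i, p b i = ∑ i, p a i := by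
  have hsum : ∀ s ∈ Icc a b, HasDerivAt (fun s => ∑ i, p s i) 0 s := fun s hs => by
    have h := HasDerivAt.fun_sum (u := Finset.univ) fun i _ => hasDerivAt_pi.1 (hp s hs) i
    rwa [sum_mulVec_eq_zero (hcol s hs)] at h
  exact constant_of_has_deriv_right_zero
    (fun s hs => (hsum s hs).continuousAt.continuousWithinAt)
    (fun s hs => (hsum s (Ico_subset_Icc_self hs)).hasDerivWithinAt) b ⟨hab, le_rfl⟩

theorem nonneg_of_hasDerivAt_mulVec (hab : a ≤ b) (hW : ContinuousOn W (Icc a b))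
    (hoff : ∀ s ∈ Icc a b, ∀ i j, i ≠ j → 0 ≤ W s i j)
    (hp : ∀ s ∈ Icc a b, HasDerivAt p (W s *ᵥ p s) s) (ha : 0 ≤ p a) : 0 ≤ p b := by
  obtain ⟨C, hC⟩ := isCompact_Icc.exists_forall_sum_row_lt hW
  intro i
  refine le_of_forall_pos_le_add fun ε hε => ?_
  set η : ℝ → ℝ := fun s => ε * Real.exp (C * (s - b)) with hη
  have hη' : ∀ s, HasDerivAt η (η s * C) s := fun s => by
    simpa [hη, mul_assoc] using (((hasDerivAt_id s).sub_const b).const_mul C).exp.const_mul ε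
  have hηpos : ∀ s, 0 < η s := fun s => mul_pos hε (Real.exp_pos _)
  set q : ℝ → ι → ℝ := fun s => p s + η s • 1
  have hq' : ∀ s ∈ Icc a b, HasDerivAt q (W s *ᵥ p s + (η s * C) • 1) s := fun s hs =>
    (hp s hs).add ((hη' s).smul_const 1)
  have hqb := nonneg_of_deriv_right_pos_boundary (q := q)
    (fun s hs => (hq' s hs).continuousAt.continuousWithinAt)
    (add_nonneg ha (smul_nonneg (hηpos a).le zero_le_one))
    (fun s hs => (hq' s (Ico_subset_Icc_self hs)).hasDerivWithinAt) ?_ b ⟨hab, le_rfl⟩ i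
  · simpa [q, hη] using hqb
  intro x hx hqx j hqj
  have hxI := Ico_subset_Icc_self hx
  have hpq : p x = q x - η x • 1 := by simp [q]
  have hWq := mulVec_apply_nonneg_of_apply_eq_zero (hoff x hxI) hqx hqj
  have hrow : (W x *ᵥ 1) j < C := by simpa [mulVec, dotProduct] using hC x hxI j
  have : 0 < η x * (C - (W x *ᵥ 1) j) := mul_pos (hηpos x) (sub_pos.2 hrow)
  simp only [hpq, mulVec_sub, mulVec_smul, Pi.add_apply, Pi.sub_apply, Pi.smul_apply,
    smul_eq_mul, Pi.one_apply]
  linarith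

end RateEquation

theorem rate_matrix_preserves_simplex_general (n : ℕ)
    (W : ℝ → Matrix (Fin n) (Fin n) ℝ)
    (hWcont : Continuous W)
    (hWoff : ∀ t ≥ (0 : ℝ), ∀ i j, i ≠ j → 0 ≤ W t i j)
    (hWcol : ∀ t ≥ (0 : ℝ), ∀ j, ∑ i, W t i j = 0)
    (p : ℝ → Fin n → ℝ)
    (hp : Differentiable ℝ p)
    (hode : ∀ t ≥ (0 : ℝ), deriv p t = (W t).mulVec (p t))
    (hp0nonneg : ∀ i, 0 ≤ p 0 i)
    (hp0sum : ∑ i, p 0 i = 1) :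
    ∀ t ≥ (0 : ℝ), (∀ i, 0 ≤ p t i) ∧ ∑ i, p t i = 1 := by
  intro t ht
  have hderiv : ∀ s ∈ Icc 0 t, HasDerivAt p (W s *ᵥ p s) s := fun s hs =>
    hode s hs.1 ▸ (hp s).hasDerivAt
  exact ⟨nonneg_of_hasDerivAt_mulVec ht hWcont.continuousOn (fun s hs => hWoff s hs.1) hderiv
      hp0nonneg,
    (sum_apply_eq_of_hasDerivAt_mulVec ht (fun s hs => hWcol s hs.1) hderiv).trans hp0sum⟩

/-- A time-dependent rate matrix generator preserves the probability simplex: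
if `W(t)` has nonnegative off-diagonal entries and vanishing column sums for
`t ≥ 0`, and `p` solves `p' = W p` with `p(0)` a probability vector, then
`p(t)` is a probability vector for all `t ≥ 0`. -/
theorem rate_matrix_preserves_simplex (n : ℕ) (hn : 1 ≤ n)
    (W : ℝ → Matrix (Fin n) (Fin n) ℝ)
    (hWcont : Continuous W)
    (hWoff : ∀ t ≥ (0 : ℝ), ∀ i j, i ≠ j → 0 ≤ W t i j)
    (hWcol : ∀ t ≥ (0 : ℝ), ∀ j, ∑ i, W t i j = 0)
    (p : ℝ → Fin n → ℝ)
    (hp : Differentiable ℝ p)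
    (hode : ∀ t ≥ (0 : ℝ), deriv p t = (W t).mulVec (p t))
    (hp0nonneg : ∀ i, 0 ≤ p 0 i)
    (hp0sum : ∑ i, p 0 i = 1) :
    ∀ t ≥ (0 : ℝ), (∀ i, 0 ≤ p t i) ∧ ∑ i, p t i = 1 :=
  rate_matrix_preserves_simplex_general n W hWcont hWoff hWcol p hp hode hp0nonneg hp0sum
end

section
/- Let n ≥ 1, let W : Matrix (Fin n) (Fin n) ℝ satisfy W_{ij} ≥ 0 for all i ≠ j and ∑_i W_{ij} = 0 for all j. Let π ∈ Fin n → ℝ have π_i > 0 for all i and satisfy W · π = 0 (matrix–vector product), and let p ∈ Fin n → ℝ be a probability vector with p_i > 0 for all i. Then ∑_i (W · p)_i · log(p_i / π_i) ≤ 0. -/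
/-!
Write `r i = p i / π i`. Because the columns of `W` sum to zero, the dissipation equals
`∑ i j, W i j * p j * (log (r i) - log (r j))`. Off the diagonal `W i j ≥ 0`, so `log t ≤ t - 1`
bounds each term by `W i j * (π j * r i - p j)`, and these bounds sum to
`∑ i, (W *ᵥ π) i * r i - ∑ i, (W *ᵥ p) i = 0` by stationarity of `π` and the column sums again.
-/

open Matrix Finset

namespace Real

theorem mul_log_div_le_sub {x y : ℝ} (hx : 0 < x) (hy : 0 < y) :
    y * log (x / y) ≤ x - y := by
  have h := mul_le_mul_of_nonneg_left (log_le_sub_one_of_pos (div_pos hx hy)) hy.le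
  rwa [mul_sub, mul_div_cancel₀ x hy.ne', mul_one] at h

theorem mul_log_sub_log_div_le {a b c : ℝ} (ha : 0 < a) (hb : 0 < b) (hc : 0 < c) :
    b * (log a - log (b / c)) ≤ c * a - b := by
  rw [← log_div ha.ne' (div_pos hb hc).ne', div_div_eq_mul_div, mul_comm a c]
  exact mul_log_div_le_sub (mul_pos hc ha) hb

end Real

namespace Matrix

variable {ι R : Type*} [Fintype ι]

theorem sum_mulVec_eq_zero_s6 [NonUnitalNonAssocSemiring R] {W : Matrix ι ι R}
    (hW : ∀ j, ∑ i, W i j = 0) (v : ι → R) : ∑ i, (W *ᵥ v) i = 0 := by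
  simp only [mulVec, dotProduct]
  rw [sum_comm]
  simp [← sum_mul, hW]

theorem sum_mulVec_mul_eq_sum_sum_mul_sub [CommRing R] {W : Matrix ι ι R}
    (hW : ∀ j, ∑ i, W i j = 0) (v f : ι → R) :
    ∑ i, (W *ᵥ v) i * f i = ∑ i, ∑ j, W i j * v j * (f i - f j) := by
  have hdiag : ∑ i, ∑ j, W i j * v j * f j = 0 := by
    rw [sum_comm]
    simp [← sum_mul, hW]
  simp only [mul_sub, sum_sub_distrib, hdiag, sub_zero, mulVec, dotProduct, sum_mul]

end Matrix

theorem kl_dissipation_inequality_general (n : ℕ)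
    (W : Matrix (Fin n) (Fin n) ℝ)
    (hWoff : ∀ i j, i ≠ j → 0 ≤ W i j)
    (hWcol : ∀ j, ∑ i, W i j = 0)
    (π : Fin n → ℝ)
    (hπpos : ∀ i, 0 < π i)
    (hπstat : W.mulVec π = 0)
    (p : Fin n → ℝ)
    (hppos : ∀ i, 0 < p i) :
    ∑ i, (W.mulVec p) i * Real.log (p i / π i) ≤ 0 := by
  set r : Fin n → ℝ := fun i => p i / π i
  have hterm : ∀ i j, W i j * p j * (Real.log (r i) - Real.log (r j))
      ≤ W i j * (π j * r i - p j) := by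
    intro i j
    rcases eq_or_ne i j with rfl | hij
    · simp [r, mul_div_cancel₀ _ (hπpos i).ne']
    rw [mul_assoc]
    exact mul_le_mul_of_nonneg_left
      (Real.mul_log_sub_log_div_le (div_pos (hppos i) (hπpos i)) (hppos j) (hπpos j))
      (hWoff i j hij)
  have hbound : ∑ i, ∑ j, W i j * (π j * r i - p j) = 0 := by
    have hrow : ∀ i, ∑ j, W i j * (π j * r i - p j) = (W *ᵥ π) i * r i - (W *ᵥ p) i :=
      fun i => by simp only [mulVec, dotProduct, mul_sub, sum_sub_distrib, sum_mul, mul_assoc]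
    simp only [hrow, hπstat, Pi.zero_apply, zero_mul, zero_sub, sum_neg_distrib,
      sum_mulVec_eq_zero_s6 hWcol, neg_zero]
  calc ∑ i, (W *ᵥ p) i * Real.log (r i)
      = ∑ i, ∑ j, W i j * p j * (Real.log (r i) - Real.log (r j)) :=
        sum_mulVec_mul_eq_sum_sum_mul_sub hWcol p _
    _ ≤ ∑ i, ∑ j, W i j * (π j * r i - p j) :=
        sum_le_sum fun i _ => sum_le_sum fun j _ => hterm i j
    _ = 0 := hbound

/-- Dissipation inequality: for a rate matrix `W` (nonnegative off-diagonal
entries, vanishing column sums) with positive stationary vector `π`, and any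
positive probability vector `p`, the instantaneous KL-divergence production
`∑ i (W p)_i log(p_i / π_i)` is nonpositive. -/
theorem kl_dissipation_inequality (n : ℕ) (hn : 1 ≤ n)
    (W : Matrix (Fin n) (Fin n) ℝ)
    (hWoff : ∀ i j, i ≠ j → 0 ≤ W i j)
    (hWcol : ∀ j, ∑ i, W i j = 0)
    (π : Fin n → ℝ)
    (hπpos : ∀ i, 0 < π i)
    (hπstat : W.mulVec π = 0)
    (p : Fin n → ℝ)
    (hppos : ∀ i, 0 < p i)
    (hpsum : ∑ i, p i = 1) :
    ∑ i, (W.mulVec p) i * Real.log (p i / π i) ≤ 0 :=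
  kl_dissipation_inequality_general n W hWoff hWcol π hπpos hπstat p hppos
end

section
/- Let n ≥ 1 and let W : ℝ → Matrix (Fin n) (Fin n) ℝ be continuous with W(t)_{ij} ≥ 0 for all i ≠ j and ∑_i W(t)_{ij} = 0 for all j and all t ≥ 0. Let π ∈ Fin n → ℝ be a probability vector with π_i > 0 for all i and W(t) · π = 0 for all t ≥ 0. Let p : ℝ → (Fin n → ℝ) be differentiable, solve p'(t) = W(t) · p(t) for t ≥ 0, with p(0) a probability vector, and assume p_i(t) > 0 for all i and all t ≥ 0. Then the Kullback–Leibler divergence t ↦ D_KL(p(t)‖π) := ∑_i p_i(t) log(p_i(t)/π_i) is monotone non-increasing on [0, ∞). -/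
/-!
Writing `r = p / π` and using that the columns of `W` sum to zero, the time derivative of
`D_KL(p ‖ π)` along `p' = W p` equals `∑_{i,j} W_ij π_j r_j (log r_i - log r_j)`. The
inequality `y (log x - log y) ≤ x - y` bounds each off-diagonal term by `W_ij π_j (r_i - r_j)`,
and these sum to zero because `W π = 0` and the columns of `W` sum to zero.
-/

open Matrix Finset

theorem Real.mul_log_sub_log_le_sub {x y : ℝ} (hx : 0 < x) (hy : 0 < y) :
    y * (Real.log x - Real.log y) ≤ x - y := by
  rw [← Real.log_div hx.ne' hy.ne']
  calc y * Real.log (x / y) ≤ y * (x / y - 1) :=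
        mul_le_mul_of_nonneg_left (Real.log_le_sub_one_of_pos (div_pos hx hy)) hy.le
    _ = x - y := by field_simp

theorem HasDerivAt.sum_mul_log_div {ι : Type*} [Fintype ι] {p : ℝ → ι → ℝ} {v : ι → ℝ}
    {t : ℝ} (hp : HasDerivAt p v t) {π : ι → ℝ} (hpt : ∀ i, p t i ≠ 0) (hπ : ∀ i, π i ≠ 0) :
    HasDerivAt (fun s => ∑ i, p s i * Real.log (p s i / π i))
      (∑ i, v i * Real.log (p t i / π i) + ∑ i, v i) t := by
  rw [← sum_add_distrib]
  refine HasDerivAt.fun_sum fun i _ => ?_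
  have hpi : HasDerivAt (fun s => p s i) (v i) t := hasDerivAt_pi.1 hp i
  refine (hpi.fun_mul ((hpi.div_const (π i)).log (div_ne_zero (hpt i) (hπ i)))).congr_deriv ?_
  rw [div_div_div_cancel_right₀ (hπ i), mul_div_cancel₀ _ (hpt i)]

namespace Matrix

variable {ι : Type*} [Fintype ι] {A : Matrix ι ι ℝ}

theorem sum_mulVec_eq_zero_of_sum_col_eq_zero (hcol : ∀ j, ∑ i, A i j = 0) (v : ι → ℝ) :
    ∑ i, (A *ᵥ v) i = 0 := by
  simp only [mulVec, dotProduct]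
  rw [sum_comm]
  simp [← sum_mul, hcol]

theorem sum_mulVec_mul_log_div_nonpos (hoff : ∀ i j, i ≠ j → 0 ≤ A i j)
    (hcol : ∀ j, ∑ i, A i j = 0) {π q : ι → ℝ} (hπ : ∀ i, 0 < π i)
    (hstat : A *ᵥ π = 0) (hq : ∀ i, 0 < q i) :
    ∑ i, (A *ᵥ q) i * Real.log (q i / π i) ≤ 0 := by
  set r : ι → ℝ := fun i => q i / π i
  have hr : ∀ i, 0 < r i := fun i => div_pos (hq i) (hπ i)
  have hq_eq : ∀ j, q j = π j * r j := fun j => by simp [r, mul_div_cancel₀ _ (hπ j).ne']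
  have hlhs : ∑ i, (A *ᵥ q) i * Real.log (r i)
      = ∑ i, ∑ j, A i j * (q j * Real.log (r i) - q j * Real.log (r j)) := by
    have h := sum_mulVec_eq_zero_of_sum_col_eq_zero hcol fun j => q j * Real.log (r j)
    simp only [mulVec, dotProduct] at h
    simp only [mul_sub, sum_sub_distrib, h, sub_zero, mulVec, dotProduct, sum_mul, mul_assoc]
  have hrhs : ∑ i, ∑ j, A i j * (π j * r i - q j) = 0 := by
    have h := sum_mulVec_eq_zero_of_sum_col_eq_zero hcol q
    have hπ0 : ∀ i, ∑ j, A i j * π j = 0 := fun i => congrFun hstat i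
    simp only [mulVec, dotProduct] at h
    simp only [mul_sub, sum_sub_distrib, h, sub_zero, ← mul_assoc, ← sum_mul, hπ0, zero_mul,
      sum_const_zero]
  calc ∑ i, (A *ᵥ q) i * Real.log (q i / π i)
      = ∑ i, ∑ j, A i j * (q j * Real.log (r i) - q j * Real.log (r j)) := hlhs
    _ ≤ ∑ i, ∑ j, A i j * (π j * r i - q j) := by
      refine sum_le_sum fun i _ => sum_le_sum fun j _ => ?_
      rcases eq_or_ne i j with rfl | hij
      · simp [← hq_eq]
      · refine mul_le_mul_of_nonneg_left ?_ (hoff i j hij)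
        calc q j * Real.log (r i) - q j * Real.log (r j)
            = π j * (r j * (Real.log (r i) - Real.log (r j))) := by rw [hq_eq j]; ring
          _ ≤ π j * (r i - r j) :=
            mul_le_mul_of_nonneg_left (Real.mul_log_sub_log_le_sub (hr i) (hr j)) (hπ j).le
          _ = π j * r i - q j := by rw [hq_eq j]; ring
    _ = 0 := hrhs

end Matrix

theorem kl_monotone_of_rate_matrix_general (n : ℕ)
    (W : ℝ → Matrix (Fin n) (Fin n) ℝ)
    (hWoff : ∀ t ≥ (0 : ℝ), ∀ i j, i ≠ j → 0 ≤ W t i j)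
    (hWcol : ∀ t ≥ (0 : ℝ), ∀ j, ∑ i, W t i j = 0)
    (π : Fin n → ℝ)
    (hπpos : ∀ i, 0 < π i)
    (hπstat : ∀ t ≥ (0 : ℝ), (W t).mulVec π = 0)
    (p : ℝ → Fin n → ℝ)
    (hp : Differentiable ℝ p)
    (hode : ∀ t ≥ (0 : ℝ), deriv p t = (W t).mulVec (p t))
    (hppos : ∀ t ≥ (0 : ℝ), ∀ i, 0 < p t i) :
    AntitoneOn (fun t => ∑ i, p t i * Real.log (p t i / π i)) (Set.Ici (0 : ℝ)) := by
  have hderiv : ∀ t ∈ Set.Ici (0 : ℝ),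
      HasDerivAt (fun s => ∑ i, p s i * Real.log (p s i / π i))
      (∑ i, (W t *ᵥ p t) i * Real.log (p t i / π i) + ∑ i, (W t *ᵥ p t) i) t := fun t ht =>
    (hode t ht ▸ (hp t).hasDerivAt).sum_mul_log_div (fun i => (hppos t ht i).ne')
      fun i => (hπpos i).ne'
  refine antitoneOn_of_hasDerivWithinAt_nonpos (convex_Ici 0)
    (fun t ht => (hderiv t ht).continuousAt.continuousWithinAt)
    (fun t ht => (hderiv t (interior_subset ht)).hasDerivWithinAt) fun t ht => ?_
  have ht : (0 : ℝ) ≤ t := interior_subset ht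
  rw [sum_mulVec_eq_zero_of_sum_col_eq_zero (hWcol t ht), add_zero]
  exact sum_mulVec_mul_log_div_nonpos (hWoff t ht) (hWcol t ht) hπpos (hπstat t ht) (hppos t ht)

/-- Proposition 1: classical divisibility implies monotone non-increasing
Kullback–Leibler relaxation. -/
theorem kl_monotone_of_rate_matrix (n : ℕ) (hn : 1 ≤ n)
    (W : ℝ → Matrix (Fin n) (Fin n) ℝ)
    (hWcont : Continuous W)
    (hWoff : ∀ t ≥ (0 : ℝ), ∀ i j, i ≠ j → 0 ≤ W t i j)
    (hWcol : ∀ t ≥ (0 : ℝ), ∀ j, ∑ i, W t i j = 0)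
    (π : Fin n → ℝ)
    (hπpos : ∀ i, 0 < π i)
    (hπsum : ∑ i, π i = 1)
    (hπstat : ∀ t ≥ (0 : ℝ), (W t).mulVec π = 0)
    (p : ℝ → Fin n → ℝ)
    (hp : Differentiable ℝ p)
    (hode : ∀ t ≥ (0 : ℝ), deriv p t = (W t).mulVec (p t))
    (hp0nonneg : ∀ i, 0 ≤ p 0 i)
    (hp0sum : ∑ i, p 0 i = 1)
    (hppos : ∀ t ≥ (0 : ℝ), ∀ i, 0 < p t i) :
    AntitoneOn (fun t => ∑ i, p t i * Real.log (p t i / π i)) (Set.Ici (0 : ℝ)) :=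
  kl_monotone_of_rate_matrix_general n W hWoff hWcol π hπpos hπstat p hp hode hppos
end

section
/- Let n ≥ 1 and let W : ℝ → Matrix (Fin n) (Fin n) ℝ be continuous with W(t)_{ij} ≥ 0 for all i ≠ j, ∑_i W(t)_{ij} = 0 for all j (vanishing column sums), and ∑_j W(t)_{ij} = 0 for all i (vanishing row sums) for all t ≥ 0. Let p : ℝ → (Fin n → ℝ) be differentiable, solve p'(t) = W(t) · p(t) for t ≥ 0, with p(0) a probability vector, and assume p_i(t) > 0 for all i and t ≥ 0. Then the Shannon entropy S(t) := −∑_i p_i(t) log p_i(t) is monotone non-decreasing on [0, ∞). -/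
/-!
Write `q = p(t)`. Differentiating `S = ∑ negMulLog pᵢ` along `p' = W p` gives
`S' = -∑ᵢ (W q)ᵢ log qᵢ - ∑ᵢ (W q)ᵢ`. The second sum vanishes by the column sums. Using the
column sums once more, `∑ᵢ (W q)ᵢ log qᵢ = ∑ᵢⱼ Wᵢⱼ qⱼ (log qᵢ - log qⱼ)`, and `log x ≤ x - 1`
bounds each off-diagonal term by `Wᵢⱼ (qᵢ - qⱼ)`, whose double sum vanishes by the row and
column sums. Hence `S' ≥ 0`.
-/

open Matrix Finset Real

lemma Real.mul_sub_log_le_sub {a b : ℝ} (ha : 0 < a) (hb : 0 < b) :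
    b * (log a - log b) ≤ a - b := by
  have h : log a - log b ≤ a / b - 1 := by
    rw [← log_div ha.ne' hb.ne']
    exact log_le_sub_one_of_pos (div_pos ha hb)
  calc b * (log a - log b) ≤ b * (a / b - 1) := mul_le_mul_of_nonneg_left h hb.le
    _ = a - b := by field_simp

lemma hasDerivAt_neg_sum_mul_log {ι : Type*} [Fintype ι] {p : ℝ → ι → ℝ} {p' : ι → ℝ}
    {t : ℝ} (hp : HasDerivAt p p' t) (hpt : ∀ i, p t i ≠ 0) :
    HasDerivAt (fun s => -∑ i, p s i * log (p s i)) (∑ i, p' i * (-log (p t i) - 1)) t := by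
  have hS : (fun s => -∑ i, p s i * log (p s i)) = fun s => ∑ i, negMulLog (p s i) := by
    funext s
    simp only [negMulLog, neg_mul, sum_neg_distrib]
  rw [hS]
  refine HasDerivAt.fun_sum fun i _ => ?_
  rw [mul_comm]
  exact (hasDerivAt_negMulLog (hpt i)).comp t (hasDerivAt_pi.mp hp i)

namespace Matrix

variable {ι : Type*} [Fintype ι] {A : Matrix ι ι ℝ}

lemma sum_mulVec_eq_zero_of_sum_col (hcol : ∀ j, ∑ i, A i j = 0) (q : ι → ℝ) :
    ∑ i, (A *ᵥ q) i = 0 := by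
  simp only [mulVec, dotProduct]
  rw [sum_comm]
  simp [← sum_mul, hcol]

lemma sum_mulVec_mul_log_nonpos (hoff : ∀ i j, i ≠ j → 0 ≤ A i j)
    (hcol : ∀ j, ∑ i, A i j = 0) (hrow : ∀ i, ∑ j, A i j = 0) {q : ι → ℝ} (hq : ∀ i, 0 < q i) :
    ∑ i, (A *ᵥ q) i * log (q i) ≤ 0 := by
  have hdiag : ∑ i, ∑ j, A i j * q j * log (q j) = 0 := by
    rw [sum_comm]
    simp [← sum_mul, hcol]
  have hbalance : ∑ i, ∑ j, A i j * (q i - q j) = 0 := by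
    simp only [mul_sub, sum_sub_distrib]
    rw [sum_comm (f := fun i j => A i j * q j)]
    simp [← sum_mul, hcol, hrow]
  have hterm : ∀ i j, A i j * q j * (log (q i) - log (q j)) ≤ A i j * (q i - q j) := by
    intro i j
    rcases eq_or_ne i j with rfl | hij
    · simp
    · rw [mul_assoc]
      exact mul_le_mul_of_nonneg_left (mul_sub_log_le_sub (hq i) (hq j)) (hoff i j hij)
  calc ∑ i, (A *ᵥ q) i * log (q i)
      = ∑ i, ∑ j, A i j * q j * (log (q i) - log (q j)) := by
        simp only [mul_sub, sum_sub_distrib, hdiag, sub_zero, mulVec, dotProduct, sum_mul]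
    _ ≤ ∑ i, ∑ j, A i j * (q i - q j) := sum_le_sum fun i _ => sum_le_sum fun j _ => hterm i j
    _ = 0 := hbalance

lemma sum_mulVec_mul_neg_log_sub_one_nonneg (hoff : ∀ i j, i ≠ j → 0 ≤ A i j)
    (hcol : ∀ j, ∑ i, A i j = 0) (hrow : ∀ i, ∑ j, A i j = 0) {q : ι → ℝ} (hq : ∀ i, 0 < q i) :
    0 ≤ ∑ i, (A *ᵥ q) i * (-log (q i) - 1) := by
  have hlog := sum_mulVec_mul_log_nonpos hoff hcol hrow hq
  have hmass := sum_mulVec_eq_zero_of_sum_col hcol q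
  simp only [mul_sub, mul_neg, mul_one, sum_sub_distrib, sum_neg_distrib]
  linarith

end Matrix

theorem entropy_monotone_of_doubly_balanced_general (n : ℕ)
    (W : ℝ → Matrix (Fin n) (Fin n) ℝ)
    (hWoff : ∀ t ≥ (0 : ℝ), ∀ i j, i ≠ j → 0 ≤ W t i j)
    (hWcol : ∀ t ≥ (0 : ℝ), ∀ j, ∑ i, W t i j = 0)
    (hWrow : ∀ t ≥ (0 : ℝ), ∀ i, ∑ j, W t i j = 0)
    (p : ℝ → Fin n → ℝ)
    (hp : Differentiable ℝ p)
    (hode : ∀ t ≥ (0 : ℝ), deriv p t = (W t).mulVec (p t))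
    (hppos : ∀ t ≥ (0 : ℝ), ∀ i, 0 < p t i) :
    MonotoneOn (fun t => -∑ i, p t i * Real.log (p t i)) (Set.Ici (0 : ℝ)) := by
  have hS : ∀ t ≥ (0 : ℝ), HasDerivAt (fun s => -∑ i, p s i * log (p s i))
      (∑ i, (W t *ᵥ p t) i * (-log (p t i) - 1)) t := fun t ht => by
    rw [← hode t ht]
    exact hasDerivAt_neg_sum_mul_log (hp t).hasDerivAt fun i => (hppos t ht i).ne'
  refine monotoneOn_of_hasDerivWithinAt_nonneg (convex_Ici 0)
    (fun t ht => (hS t ht).continuousAt.continuousWithinAt)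
    (fun t ht => (hS t (interior_subset ht)).hasDerivWithinAt) fun t ht => ?_
  have ht : (0 : ℝ) ≤ t := interior_subset ht
  exact sum_mulVec_mul_neg_log_sub_one_nonneg (hWoff t ht) (hWcol t ht) (hWrow t ht) (hppos t ht)

/-- For a doubly balanced time-dependent rate matrix (nonnegative off-diagonal
entries, vanishing column and row sums), the Shannon entropy of the solution
of `p' = W p` is monotone non-decreasing on `[0, ∞)`. -/
theorem entropy_monotone_of_doubly_balanced (n : ℕ) (hn : 1 ≤ n)
    (W : ℝ → Matrix (Fin n) (Fin n) ℝ)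
    (hWcont : Continuous W)
    (hWoff : ∀ t ≥ (0 : ℝ), ∀ i j, i ≠ j → 0 ≤ W t i j)
    (hWcol : ∀ t ≥ (0 : ℝ), ∀ j, ∑ i, W t i j = 0)
    (hWrow : ∀ t ≥ (0 : ℝ), ∀ i, ∑ j, W t i j = 0)
    (p : ℝ → Fin n → ℝ)
    (hp : Differentiable ℝ p)
    (hode : ∀ t ≥ (0 : ℝ), deriv p t = (W t).mulVec (p t))
    (hp0nonneg : ∀ i, 0 ≤ p 0 i)
    (hp0sum : ∑ i, p 0 i = 1)
    (hppos : ∀ t ≥ (0 : ℝ), ∀ i, 0 < p t i) :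
    MonotoneOn (fun t => -∑ i, p t i * Real.log (p t i)) (Set.Ici (0 : ℝ)) :=
  entropy_monotone_of_doubly_balanced_general n W hWoff hWcol hWrow p hp hode hppos
end

section
/- Let λ > 0 and ω > 0 and define b : ℝ → ℝ by b(t) = (1/4) e^{−λ t} sin²(ω t). Then b is differentiable, max(b'(·), 0) is integrable on [0, ∞), and the backflow functional is strictly positive: N_b := ∫₀^∞ max(b'(t), 0) dt > 0. In particular, b is not monotone non-increasing on [0, ∞). -/
/-!
`b` vanishes at `0` and is positive at `π / (2ω)`, so by the fundamental theorem of calculus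
`0 < b (π / (2ω)) - b 0 = ∫₀^{π/(2ω)} b' ≤ ∫₀^∞ max (b', 0)`. The last integral converges
because `b' t = e^{-λt} (ω sin (2ωt) - λ sin² (ωt)) / 4` is dominated by `(ω + λ) e^{-λt} / 4`.
-/

/-- Backflow functional: `N_f = ∫₀^∞ max(f'(t), 0) dt`. -/
noncomputable def backflow (f : ℝ → ℝ) : ℝ :=
  ∫ t in Set.Ioi (0 : ℝ), max (deriv f t) 0

open Real Set MeasureTheory

theorem sub_le_backflow {f : ℝ → ℝ} (hf : Differentiable ℝ f) {T : ℝ} (hT : 0 ≤ T)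
    (hf'T : IntervalIntegrable (deriv f) volume 0 T)
    (hf' : IntegrableOn (fun t => max (deriv f t) 0) (Ioi 0)) :
    f T - f 0 ≤ backflow f :=
  calc f T - f 0 = ∫ t in 0..T, deriv f t :=
        (intervalIntegral.integral_deriv_eq_sub (fun t _ => hf t) hf'T).symm
    _ ≤ ∫ t in 0..T, max (deriv f t) 0 :=
        intervalIntegral.integral_mono_on hT hf'T
          ((intervalIntegrable_iff_integrableOn_Ioc_of_le hT).2 (hf'.mono_set Ioc_subset_Ioi_self))
          fun _ _ => le_max_left _ _
    _ = ∫ t in Ioc 0 T, max (deriv f t) 0 := intervalIntegral.integral_of_le hT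
    _ ≤ backflow f :=
        setIntegral_mono_set hf' (ae_of_all _ fun _ => le_max_right _ _)
          Ioc_subset_Ioi_self.eventuallyLE

theorem hasDerivAt_exp_mul_sin_sq (lam ω t : ℝ) :
    HasDerivAt (fun t => exp (-lam * t) * sin (ω * t) ^ 2)
      (exp (-lam * t) * (ω * sin (2 * (ω * t)) - lam * sin (ω * t) ^ 2)) t := by
  refine (((hasDerivAt_id t).const_mul (-lam)).exp.mul
    (((hasDerivAt_id t).const_mul ω).sin.pow 2)).congr_deriv ?_
  simp only [id, Pi.pow_apply, sin_two_mul]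
  ring

theorem abs_mul_sin_two_mul_sub_mul_sin_sq_le (ω lam x : ℝ) :
    |ω * sin (2 * x) - lam * sin x ^ 2| ≤ |ω| + |lam| := by
  have hsin2 : |sin (2 * x)| ≤ 1 := abs_sin_le_one _
  have hsinsq : |sin x ^ 2| ≤ 1 := by
    rw [abs_pow]; exact pow_le_one₀ (abs_nonneg _) (abs_sin_le_one x)
  calc |ω * sin (2 * x) - lam * sin x ^ 2|
      ≤ |ω| * |sin (2 * x)| + |lam| * |sin x ^ 2| := by
        rw [← abs_mul, ← abs_mul]; exact abs_sub _ _
    _ ≤ |ω| * 1 + |lam| * 1 := by gcongr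
    _ = |ω| + |lam| := by ring

theorem integrableOn_Ioi_exp_mul_sin_two_mul_sub_mul_sin_sq {lam : ℝ} (hlam : 0 < lam)
    (ω : ℝ) :
    IntegrableOn (fun t => exp (-lam * t) * (ω * sin (2 * (ω * t)) - lam * sin (ω * t) ^ 2))
      (Ioi 0) :=
  (exp_neg_integrableOn_Ioi 0 hlam).mul_bdd (by fun_prop : Continuous _).aestronglyMeasurable
    (ae_of_all _ fun t => abs_mul_sin_two_mul_sub_mul_sin_sq_le ω lam (ω * t))

/-- The damped-oscillation intrinsic component
`b(t) = (1/4) e^{−λt} sin²(ωt)` is differentiable, its positive derivative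
part is integrable on `[0, ∞)`, and its backflow functional is strictly
positive; in particular `b` is not monotone non-increasing on `[0, ∞)`. -/
theorem damped_oscillation_positive_backflow (lam ω : ℝ)
    (hlam : 0 < lam) (hω : 0 < ω)
    (b : ℝ → ℝ)
    (hb : ∀ t, b t = (1 / 4) * Real.exp (-lam * t) * Real.sin (ω * t) ^ 2) :
    Differentiable ℝ b ∧
    MeasureTheory.IntegrableOn (fun t => max (deriv b t) 0) (Set.Ioi (0 : ℝ)) ∧
    0 < backflow b ∧
    ¬ AntitoneOn b (Set.Ici (0 : ℝ)) := by
  have hb_eq : b = fun t => 1 / 4 * (exp (-lam * t) * sin (ω * t) ^ 2) :=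
    funext fun t => by rw [hb]; ring
  set b' := fun t => 1 / 4 * (exp (-lam * t) * (ω * sin (2 * (ω * t)) - lam * sin (ω * t) ^ 2))
  have hderiv (t : ℝ) : HasDerivAt b (b' t) t :=
    hb_eq ▸ (hasDerivAt_exp_mul_sin_sq lam ω t).const_mul _
  have hb'_eq : deriv b = b' := funext fun t => (hderiv t).deriv
  have hdiff : Differentiable ℝ b := fun t => (hderiv t).differentiableAt
  have hint : IntegrableOn (deriv b) (Ioi 0) :=
    hb'_eq ▸ (integrableOn_Ioi_exp_mul_sin_two_mul_sub_mul_sin_sq hlam ω).const_mul _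
  set T := π / (2 * ω)
  have hT : 0 ≤ T := by positivity
  have hbT : b 0 < b T := by
    have hsinT : sin (ω * T) = 1 := by
      rw [show ω * (π / (2 * ω)) = π / 2 by field_simp]; exact sin_pi_div_two
    rw [hb, hb, hsinT]
    norm_num [exp_pos]
  refine ⟨hdiff, hint.pos_part, ?_, fun hanti => (hanti self_mem_Ici hT hT).not_gt hbT⟩
  have hb'_cont : Continuous (deriv b) := hb'_eq ▸ by fun_prop
  exact (sub_pos.2 hbT).trans_le
    (sub_le_backflow hdiff hT (hb'_cont.intervalIntegrable 0 T) hint.pos_part)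
end
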